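/- arXiv:2106.11389 — 3 statements merged into one kernel-verified Lean document; each statement's English description precedes it below -/
import Mathlib

section
/- Let π₀ > 0 and ε be a real number with 0 ≤ ε ≤ π₀/2. For each pair (t,y) ∈ {0,1}², let π_{t,y} and π̂_{t,y} be real numbers with π_{t,y} ≥ π₀ and |π̂_{t,y} − π_{t,y}| ≤ ε. Define log r = log π_{1,1} − log π_{1,0} − log π_{0,1} + log π_{0,0} and log r̂ = log π̂_{1,1} − log π̂_{1,0} − log π̂_{0,1} + log π̂_{0,0}. Then |log r̂ − log r| ≤ 8ε/π₀. -/
lemma log_diff_bound (p₀ ε a b : ℝ) (hp₀ : 0 < p₀) (hε₀ : 0 ≤ ε) (hε : ε ≤ p₀ / 2)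
    (hb : p₀ ≤ b) (hab : |a - b| ≤ ε) :
    |Real.log a - Real.log b| ≤ 2 * ε / p₀ := by
  have hb0 : 0 < b := lt_of_lt_of_le hp₀ hb
  have h1 : b - a ≤ ε := by have := abs_le.mp hab; linarith [this.1]
  have h2 : a - b ≤ ε := (abs_le.mp hab).2
  have ha : p₀ / 2 ≤ a := by linarith
  have ha0 : 0 < a := lt_of_lt_of_le (by linarith) ha
  have key : ∀ x y : ℝ, 0 < x → 0 < y → Real.log x - Real.log y ≤ (x - y) / y := by
    intro x y hx hy
    have h := Real.log_le_sub_one_of_pos (show 0 < x / y from div_pos hx hy)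
    rw [Real.log_div hx.ne' hy.ne'] at h
    calc Real.log x - Real.log y ≤ x / y - 1 := h
      _ = (x - y) / y := by field_simp
  rw [abs_sub_le_iff]
  constructor
  · calc Real.log a - Real.log b ≤ (a - b) / b := key a b ha0 hb0
      _ ≤ ε / p₀ := by gcongr
      _ ≤ 2 * ε / p₀ := by gcongr; linarith
  · calc Real.log b - Real.log a ≤ (b - a) / a := key b a hb0 ha0
      _ ≤ ε / (p₀ / 2) := by gcongr
      _ = 2 * ε / p₀ := by field_simp
/-- Deterministic core of Theorem 1: estimates of the four cell probabilities of a
`2×2` contingency table, each within `ε ≤ π₀/2` of true values bounded below by `π₀ > 0`,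
give a log odds ratio estimate within `8ε/π₀` of the true log odds ratio. -/
theorem log_odds_ratio_estimate_error
    (p₀ ε : ℝ) (hp₀ : 0 < p₀) (hε₀ : 0 ≤ ε) (hε : ε ≤ p₀ / 2)
    (p phat : Fin 2 → Fin 2 → ℝ)
    (hp : ∀ t y : Fin 2, p₀ ≤ p t y)
    (hclose : ∀ t y : Fin 2, |phat t y - p t y| ≤ ε) :
    |(Real.log (phat 1 1) - Real.log (phat 1 0) - Real.log (phat 0 1) + Real.log (phat 0 0))
      - (Real.log (p 1 1) - Real.log (p 1 0) - Real.log (p 0 1) + Real.log (p 0 0))|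
      ≤ 8 * ε / p₀ := by
  have B : ∀ t y : Fin 2, |Real.log (phat t y) - Real.log (p t y)| ≤ 2 * ε / p₀ :=
    fun t y => log_diff_bound p₀ ε _ _ hp₀ hε₀ hε (hp t y) (hclose t y)
  have e : (8:ℝ) * ε / p₀ = 2*ε/p₀ + 2*ε/p₀ + 2*ε/p₀ + 2*ε/p₀ := by ring
  rw [e]
  have h11 := B 1 1; have h10 := B 1 0; have h01 := B 0 1; have h00 := B 0 0
  set a := Real.log (phat 1 1) - Real.log (p 1 1)
  set b := Real.log (phat 1 0) - Real.log (p 1 0)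
  set c := Real.log (phat 0 1) - Real.log (p 0 1)
  set d := Real.log (phat 0 0) - Real.log (p 0 0)
  have : (Real.log (phat 1 1) - Real.log (phat 1 0) - Real.log (phat 0 1) + Real.log (phat 0 0))
      - (Real.log (p 1 1) - Real.log (p 1 0) - Real.log (p 0 1) + Real.log (p 0 0))
      = a - b - c + d := by simp only [a, b, c, d]; ring
  rw [this]
  calc |a - b - c + d| ≤ |a - b - c| + |d| := abs_add_le _ _
    _ ≤ |a - b| + |c| + |d| := by linarith [abs_sub (a-b) c]
    _ ≤ |a| + |b| + |c| + |d| := by linarith [abs_sub a b]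
    _ ≤ 2*ε/p₀ + 2*ε/p₀ + 2*ε/p₀ + 2*ε/p₀ := by
        simp only [a, b, c, d]; linarith
end

section
/- Let μ be a probability measure on ℝ, let N ≥ 1, and let X₁, …, X_N be independent real-valued random variables on a probability space, each with distribution μ. Let z_N(ω) = max_{1 ≤ j ≤ N} X_j(ω). Then for every ε ∈ (0,1), the probability of the event { ω : μ({x ∈ ℝ : x > z_N(ω)}) > ε } is at most (1 − ε)^N. -/
open MeasureTheory ProbabilityTheory

/-- Order-statistics bound underlying Proposition 2: if `z_N` is the maximum of `N` i.i.d.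
samples from `μ`, the probability that the `μ`-mass strictly above the sample maximum
exceeds `ε` is at most `(1-ε)^N`. -/
theorem prob_mass_above_max_gt_eps_le
    (μ : Measure ℝ) [IsProbabilityMeasure μ]
    (N : ℕ) (hN : 1 ≤ N)
    {Ω : Type*} [MeasureSpace Ω] [IsProbabilityMeasure (ℙ : Measure Ω)]
    (X : Fin N → Ω → ℝ)
    (hmeas : ∀ j, Measurable (X j))
    (hindep : iIndepFun X ℙ)
    (hdist : ∀ j, Measure.map (X j) ℙ = μ)
    (ε : ℝ) (hε : 0 < ε) (hε1 : ε < 1) :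
    ℙ {ω | ENNReal.ofReal ε <
        μ {x | (Finset.univ.sup' (Finset.univ_nonempty_iff.mpr ⟨⟨0, hN⟩⟩)
          fun j => X j ω) < x}}
      ≤ ENNReal.ofReal ((1 - ε) ^ N) := by
  set A : Set ℝ := {x | ENNReal.ofReal ε < μ (Set.Ioi x)} with hA
  have hdown : ∀ {a b : ℝ}, a ≤ b → b ∈ A → a ∈ A := by
    intro a b hab hb
    exact lt_of_lt_of_le hb (measure_mono (Set.Ioi_subset_Ioi hab))
  -- there exists a point not in A
  have hnotA : ∃ x : ℝ, x ∉ A := by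
    have hiter : (⋂ n : ℕ, Set.Ioi (n : ℝ)) = ∅ := by
      ext x
      simp only [Set.mem_iInter, Set.mem_Ioi, Set.mem_empty_iff_false, iff_false, not_forall,
        not_lt]
      obtain ⟨n, hn⟩ := exists_nat_gt x
      exact ⟨n, hn.le⟩
    have htend : Filter.Tendsto (fun n : ℕ => μ (Set.Ioi (n : ℝ))) Filter.atTop (nhds 0) := by
      have := tendsto_measure_iInter_atTop (μ := μ) (s := fun n : ℕ => Set.Ioi (n : ℝ))
        (fun n => measurableSet_Ioi.nullMeasurableSet)
        (fun m n h => Set.Ioi_subset_Ioi (by exact_mod_cast h))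
        ⟨0, measure_ne_top μ _⟩
      rwa [hiter, measure_empty] at this
    have hpos : (0 : ENNReal) < ENNReal.ofReal ε := ENNReal.ofReal_pos.mpr hε
    obtain ⟨n, hn⟩ := (htend.eventually_lt_const hpos).exists
    exact ⟨n, not_lt.mpr hn.le⟩
  -- the event is contained in ⋂ j, X j ⁻¹' A
  have hsub : {ω | ENNReal.ofReal ε <
        μ {x | (Finset.univ.sup' (Finset.univ_nonempty_iff.mpr ⟨⟨0, hN⟩⟩)
          fun j => X j ω) < x}} ⊆ ⋂ j ∈ Finset.univ, X j ⁻¹' A := by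
    intro ω hω
    simp only [Set.mem_iInter]
    intro j _
    have hle : X j ω ≤ Finset.univ.sup' (Finset.univ_nonempty_iff.mpr ⟨⟨0, hN⟩⟩)
        fun j => X j ω := Finset.le_sup' (fun j => X j ω) (Finset.mem_univ j)
    have : μ {x | (Finset.univ.sup' (Finset.univ_nonempty_iff.mpr ⟨⟨0, hN⟩⟩)
        fun j => X j ω) < x} ≤ μ (Set.Ioi (X j ω)) := by
      apply measure_mono
      intro x hx
      exact lt_of_le_of_lt hle hx
    exact lt_of_lt_of_le hω this
  by_cases hne : A.Nonempty
  · -- A is nonempty; let t be its supremum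
    have hbdd : BddAbove A := by
      obtain ⟨x, hx⟩ := hnotA
      refine ⟨x, fun a ha => ?_⟩
      by_contra h
      push_neg at h
      exact hx (hdown h.le ha)
    set t := sSup A with ht
    obtain ⟨hAm, key⟩ : MeasurableSet A ∧ μ A + ENNReal.ofReal ε ≤ 1 := by
      by_cases htA : t ∈ A
      · have hA_eq : A = Set.Iic t :=
          subset_antisymm (fun a ha => le_csSup hbdd ha) (fun a ha => hdown ha htA)
        refine ⟨hA_eq ▸ measurableSet_Iic, ?_⟩
        calc μ A + ENNReal.ofReal ε ≤ μ (Set.Iic t) + μ (Set.Ioi t) :=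
              add_le_add (le_of_eq (by rw [hA_eq])) htA.le
          _ = μ (Set.Iic t ∪ Set.Ioi t) :=
              (measure_union (by simp [Set.disjoint_left]) measurableSet_Ioi).symm
          _ = 1 := by rw [Set.Iic_union_Ioi, measure_univ]
      · have hA_eq : A = Set.Iio t := by
          apply subset_antisymm
          · intro a ha
            exact lt_of_le_of_ne (le_csSup hbdd ha) (by rintro rfl; exact htA ha)
          · intro a ha
            obtain ⟨b, hb, hab⟩ := exists_lt_of_lt_csSup hne ha
            exact hdown hab.le hb
        have hIci : ENNReal.ofReal ε ≤ μ (Set.Ici t) := by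
          have hiter : Set.Ici t = ⋂ n : ℕ, Set.Ioi (t - 1 / (n + 1)) := by
            ext x
            simp only [Set.mem_Ici, Set.mem_iInter, Set.mem_Ioi]
            constructor
            · intro hx n
              have : (0 : ℝ) < 1 / (n + 1) := by positivity
              linarith
            · intro h
              by_contra hx
              push_neg at hx
              obtain ⟨n, hn⟩ := exists_nat_one_div_lt (sub_pos.mpr hx)
              have := h n
              linarith
          have htend : Filter.Tendsto (fun n : ℕ => μ (Set.Ioi (t - 1 / (n + 1))))
              Filter.atTop (nhds (μ (Set.Ici t))) := by
            have := tendsto_measure_iInter_atTop (μ := μ)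
              (s := fun n : ℕ => Set.Ioi (t - 1 / (n + 1)))
              (fun n => measurableSet_Ioi.nullMeasurableSet)
              (fun m n h => Set.Ioi_subset_Ioi (by
                have : (1 : ℝ) / (n + 1) ≤ 1 / (m + 1) := by
                  apply one_div_le_one_div_of_le (by positivity)
                  exact_mod_cast add_le_add_left (Nat.cast_le.mpr h) 1
                linarith))
              ⟨0, measure_ne_top μ _⟩
            rwa [← hiter] at this
          refine ge_of_tendsto htend (Filter.Eventually.of_forall fun n => ?_)
          have hmem : t - 1 / (n + 1) ∈ A := by
            rw [hA_eq]
            have : (0 : ℝ) < 1 / (n + 1) := by positivity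
            simp only [Set.mem_Iio]
            linarith
          exact hmem.le
        refine ⟨hA_eq ▸ measurableSet_Iio, ?_⟩
        calc μ A + ENNReal.ofReal ε ≤ μ (Set.Iio t) + μ (Set.Ici t) :=
              add_le_add (le_of_eq (by rw [hA_eq])) hIci
          _ = μ (Set.Iio t ∪ Set.Ici t) :=
              (measure_union (by simp [Set.disjoint_left]) measurableSet_Ici).symm
          _ = 1 := by rw [Set.Iio_union_Ici, measure_univ]
    have hμA : μ A ≤ ENNReal.ofReal (1 - ε) := by
      have h1 : μ A ≤ 1 - ENNReal.ofReal ε :=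
        ENNReal.le_sub_of_add_le_right ENNReal.ofReal_ne_top key
      have h2 : (1 : ENNReal) - ENNReal.ofReal ε = ENNReal.ofReal (1 - ε) := by
        rw [ENNReal.ofReal_sub 1 hε.le, ENNReal.ofReal_one]
      rwa [h2] at h1
    calc ℙ {ω | ENNReal.ofReal ε <
        μ {x | (Finset.univ.sup' (Finset.univ_nonempty_iff.mpr ⟨⟨0, hN⟩⟩)
          fun j => X j ω) < x}} ≤ ℙ (⋂ j ∈ Finset.univ, X j ⁻¹' A) := measure_mono hsub
      _ = ∏ j : Fin N, ℙ (X j ⁻¹' A) :=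
          hindep.measure_inter_preimage_eq_mul Finset.univ (fun i _ => hAm)
      _ = ∏ _j : Fin N, μ A := by
          refine Finset.prod_congr rfl fun j _ => ?_
          rw [← hdist j, Measure.map_apply (hmeas j) hAm]
      _ = μ A ^ N := by simp [Finset.prod_const, Finset.card_univ]
      _ ≤ ENNReal.ofReal (1 - ε) ^ N := pow_le_pow_left' hμA N
      _ = ENNReal.ofReal ((1 - ε) ^ N) := (ENNReal.ofReal_pow (by linarith) N).symm
  · -- A is empty: the event is empty
    rw [Set.not_nonempty_iff_eq_empty] at hne
    calc ℙ {ω | ENNReal.ofReal ε <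
        μ {x | (Finset.univ.sup' (Finset.univ_nonempty_iff.mpr ⟨⟨0, hN⟩⟩)
          fun j => X j ω) < x}} ≤ ℙ (⋂ j ∈ Finset.univ, X j ⁻¹' A) := measure_mono hsub
      _ ≤ ℙ (X ⟨0, hN⟩ ⁻¹' A) :=
          measure_mono (Set.biInter_subset_of_mem (Finset.mem_univ _))
      _ = 0 := by simp [hne]
      _ ≤ _ := zero_le
end

section
/- Let μ be a probability measure on ℝ, let ε ∈ (0,1) and β ∈ (0,1), and let N be a natural number with N ≥ (2/ε)·(1 − log β). Let X₁, …, X_N be independent real-valued random variables on a probability space, each with distribution μ, and set z_N(ω) = max_{1 ≤ j ≤ N} X_j(ω). Then with probability at least 1 − β over the samples, μ({x ∈ ℝ : x > z_N(ω)}) ≤ ε. -/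
open MeasureTheory ProbabilityTheory
open scoped ENNReal

/-- Proposition 2 (scenario approach): if `N ≥ (2/ε)(1 - ln β)` and `z_N` is the maximum of
`N` i.i.d. samples from `μ`, then with probability at least `1 - β` over the samples the
`μ`-mass strictly above `z_N` is at most `ε`. -/
theorem scenario_approach
    (μ : Measure ℝ) [IsProbabilityMeasure μ]
    (ε β : ℝ) (hε : 0 < ε) (hε1 : ε < 1) (hβ : 0 < β) (hβ1 : β < 1)
    (N : ℕ) (hN1 : 1 ≤ N) (hN : (2 / ε) * (1 - Real.log β) ≤ (N : ℝ))
    {Ω : Type*} [MeasureSpace Ω] [IsProbabilityMeasure (ℙ : Measure Ω)]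
    (X : Fin N → Ω → ℝ)
    (hmeas : ∀ j, Measurable (X j))
    (hindep : iIndepFun X ℙ)
    (hdist : ∀ j, Measure.map (X j) ℙ = μ) :
    ENNReal.ofReal (1 - β) ≤
      ℙ {ω | μ {x | (Finset.univ.sup' (Finset.univ_nonempty_iff.mpr ⟨⟨0, hN1⟩⟩)
          fun j => X j ω) < x} ≤ ENNReal.ofReal ε} := by
  set S : Set ℝ := {t | μ (Set.Ioi t) ≤ ENNReal.ofReal ε} with hSdef
  have hSup : ∀ {a b : ℝ}, a ∈ S → a ≤ b → b ∈ S := fun ha hab =>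
    le_trans (measure_mono (Set.Ioi_subset_Ioi hab)) ha
  have hε0' : (0 : ENNReal) < ENNReal.ofReal ε := ENNReal.ofReal_pos.mpr hε
  have hε1' : ENNReal.ofReal ε ≤ 1 := by
    rw [← ENNReal.ofReal_one]; exact ENNReal.ofReal_le_ofReal hε1.le
  -- S is nonempty
  have hSne : S.Nonempty := by
    have h1 : Filter.Tendsto (fun x => μ (Set.Iic x)) Filter.atTop (nhds (μ Set.univ)) :=
      tendsto_measure_Iic_atTop μ
    rw [measure_univ] at h1
    have hlt : (1 : ℝ≥0∞) - ENNReal.ofReal ε < 1 :=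
      ENNReal.sub_lt_self ENNReal.one_ne_top one_ne_zero hε0'.ne'
    obtain ⟨x, hx⟩ := (h1.eventually (eventually_gt_nhds hlt)).exists
    refine ⟨x, ?_⟩
    have : μ (Set.Ioi x) = 1 - μ (Set.Iic x) := by
      rw [← Set.compl_Iic, prob_compl_eq_one_sub measurableSet_Iic]
    rw [hSdef, Set.mem_setOf_eq, this]
    calc 1 - μ (Set.Iic x) ≤ 1 - (1 - ENNReal.ofReal ε) := tsub_le_tsub_left hx.le 1
      _ = ENNReal.ofReal ε := ENNReal.sub_sub_cancel ENNReal.one_ne_top hε1'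
  -- S is bounded below
  have hSbd : BddBelow S := by
    have h1 : Filter.Tendsto (fun x => μ (Set.Ici x)) Filter.atBot (nhds (μ Set.univ)) :=
      tendsto_measure_Ici_atBot μ
    rw [measure_univ] at h1
    have hlt : ENNReal.ofReal ε < 1 := by
      rw [← ENNReal.ofReal_one]; exact ENNReal.ofReal_lt_ofReal_iff_of_nonneg hε.le |>.mpr hε1
    obtain ⟨x, hx⟩ := (h1.eventually (eventually_gt_nhds hlt)).exists
    refine ⟨x - 1, fun s hs => ?_⟩
    by_contra h
    push_neg at h
    have hx1 : μ (Set.Ioi (x - 1)) > ENNReal.ofReal ε :=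
      lt_of_lt_of_le hx (measure_mono (fun y hy => lt_of_lt_of_le (by linarith : x - 1 < x) hy))
    exact absurd (hSup hs (le_of_lt h)) (not_le.mpr hx1)
  set t : ℝ := sInf S with htdef
  -- Claim A : μ (Ioi t) ≤ ε
  have hA : μ (Set.Ioi t) ≤ ENNReal.ofReal ε := by
    have hmem : ∀ n : ℕ, t + 1 / (n + 1) ∈ S := by
      intro n
      have hlt : sInf S < t + 1 / (n + 1) := by
        rw [← htdef]; have : (0:ℝ) < 1 / (n + 1) := by positivity
        linarith
      obtain ⟨s, hsS, hst⟩ := (csInf_lt_iff hSbd hSne).mp hlt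
      exact hSup hsS hst.le
    have hU : Set.Ioi t = ⋃ n : ℕ, Set.Ioi (t + 1 / (n + 1)) := by
      ext x
      simp only [Set.mem_Ioi, Set.mem_iUnion]
      constructor
      · intro hx
        obtain ⟨n, hn⟩ := exists_nat_one_div_lt (sub_pos.mpr hx)
        exact ⟨n, by linarith⟩
      · rintro ⟨n, hn⟩
        have : (0:ℝ) < 1 / (n + 1) := by positivity
        linarith
    have hmono : Monotone fun n : ℕ => Set.Ioi (t + 1 / ((n:ℝ) + 1)) := by
      intro n m hnm x hx
      simp only [Set.mem_Ioi] at *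
      have : 1 / ((m:ℝ) + 1) ≤ 1 / ((n:ℝ) + 1) := by
        apply one_div_le_one_div_of_le (by positivity)
        exact_mod_cast by exact_mod_cast Nat.add_le_add_right hnm 1
      linarith
    rw [hU, hmono.measure_iUnion]
    exact iSup_le fun n => hmem n
  -- Claim B : μ (Iio t) ≤ 1 - ε
  have hB : μ (Set.Iio t) ≤ ENNReal.ofReal (1 - ε) := by
    have hkey : ∀ a : ℝ, a < t → μ (Set.Iic a) ≤ ENNReal.ofReal (1 - ε) := by
      intro a ha
      have haS : a ∉ S := fun h => absurd (csInf_le hSbd h) (not_le.mpr ha)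
      have h1 : ENNReal.ofReal ε ≤ μ (Set.Ioi a) := le_of_lt (not_le.mp haS)
      have h2 : μ (Set.Iic a) = 1 - μ (Set.Ioi a) := by
        rw [← Set.compl_Ioi, prob_compl_eq_one_sub measurableSet_Ioi]
      rw [h2, ENNReal.ofReal_sub _ hε.le, ENNReal.ofReal_one]
      exact tsub_le_tsub_left h1 1
    have hU : Set.Iio t = ⋃ n : ℕ, Set.Iio (t - 1 / (n + 1)) := by
      ext x
      simp only [Set.mem_Iio, Set.mem_iUnion]
      constructor
      · intro hx
        obtain ⟨n, hn⟩ := exists_nat_one_div_lt (sub_pos.mpr hx)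
        exact ⟨n, by linarith⟩
      · rintro ⟨n, hn⟩
        have : (0:ℝ) < 1 / (n + 1) := by positivity
        linarith
    have hmono : Monotone fun n : ℕ => Set.Iio (t - 1 / ((n:ℝ) + 1)) := by
      intro n m hnm x hx
      simp only [Set.mem_Iio] at *
      have : 1 / ((m:ℝ) + 1) ≤ 1 / ((n:ℝ) + 1) := by
        apply one_div_le_one_div_of_le (by positivity)
        exact_mod_cast Nat.add_le_add_right hnm 1
      linarith
    rw [hU, hmono.measure_iUnion]
    refine iSup_le fun n => ?_
    have : (0:ℝ) < 1 / ((n:ℝ) + 1) := by positivity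
    exact le_trans (measure_mono Set.Iio_subset_Iic_self) (hkey _ (by linarith))
  -- the bad event
  set B : Set Ω := ⋂ j : Fin N, X j ⁻¹' Set.Iio t with hBdef
  have hBmeas : MeasurableSet B :=
    MeasurableSet.iInter fun j => (hmeas j) measurableSet_Iio
  have hPB : ℙ B ≤ ENNReal.ofReal β := by
    have hprod : ℙ B = ∏ j : Fin N, ℙ (X j ⁻¹' Set.Iio t) := by
      exact hindep.meas_iInter fun j => ⟨Set.Iio t, measurableSet_Iio, rfl⟩
    have heach : ∀ j : Fin N, ℙ (X j ⁻¹' Set.Iio t) = μ (Set.Iio t) := by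
      intro j
      rw [← hdist j, Measure.map_apply (hmeas j) measurableSet_Iio]
    rw [hprod]
    simp only [heach, Finset.prod_const, Finset.card_univ, Fintype.card_fin]
    calc μ (Set.Iio t) ^ N ≤ ENNReal.ofReal (1 - ε) ^ N := pow_le_pow_left' hB N
      _ = ENNReal.ofReal ((1 - ε) ^ N) := by rw [ENNReal.ofReal_pow (by linarith)]
      _ ≤ ENNReal.ofReal β := by
          apply ENNReal.ofReal_le_ofReal
          have h1 : (1 - ε) ^ N ≤ Real.exp (-ε) ^ N := by
            apply pow_le_pow_left₀ (by linarith)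
            linarith [Real.add_one_le_exp (-ε)]
          have h2 : Real.exp (-ε) ^ N = Real.exp (-(ε * N)) := by
            rw [← Real.exp_nat_mul]; ring_nf
          have hlog : Real.log β < 0 := Real.log_neg hβ hβ1
          have h3 : -(ε * N) ≤ Real.log β := by
            have h := hN
            rw [div_mul_eq_mul_div, div_le_iff₀ hε] at h
            linarith
          calc (1 - ε) ^ N ≤ Real.exp (-(ε * N)) := h2 ▸ h1
            _ ≤ β := (Real.le_log_iff_exp_le hβ).mp h3
  -- complement of bad event is inside good event
  have hsub : Bᶜ ⊆ {ω | μ {x | (Finset.univ.sup' (Finset.univ_nonempty_iff.mpr ⟨⟨0, hN1⟩⟩)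
      fun j => X j ω) < x} ≤ ENNReal.ofReal ε} := by
    intro ω hω
    simp only [hBdef, Set.mem_compl_iff, Set.mem_iInter, Set.mem_preimage, Set.mem_Iio,
      not_forall, not_lt] at hω
    obtain ⟨j, hj⟩ := hω
    have hmax : t ≤ Finset.univ.sup' (Finset.univ_nonempty_iff.mpr ⟨⟨0, hN1⟩⟩)
        fun j => X j ω := le_trans hj (Finset.le_sup' (fun j => X j ω) (Finset.mem_univ j))
    refine le_trans (measure_mono fun x hx => ?_) hA
    exact lt_of_le_of_lt hmax hx
  calc ENNReal.ofReal (1 - β) = 1 - ENNReal.ofReal β := by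
        rw [ENNReal.ofReal_sub _ hβ.le, ENNReal.ofReal_one]
    _ ≤ 1 - ℙ B := tsub_le_tsub_left hPB 1
    _ = ℙ Bᶜ := (prob_compl_eq_one_sub hBmeas).symm
    _ ≤ _ := measure_mono hsub
end
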